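/- arXiv:2504.13986 — 3 statements merged into one kernel-verified Lean document; each statement's English description precedes it below -/
import Mathlib

section
/- Two models I and J are equivalent in the order ∅S generated by the lexicographic revision sequence S = [S_1,…,S_m] from the flat state if and only if for every Q-combination Q of S_1,…,S_m, I and J give the same truth value to Q. -/
/-- Propositional formulas over variables of type `α`. -/
inductive PropForm (α : Type) : Type
  | var : α → PropForm α
  | tru : PropForm α
  | fls : PropForm α
  | neg : PropForm α → PropForm α
  | conj : PropForm α → PropForm α → PropForm α
  | disj : PropForm α → PropForm α → PropForm α

namespace PropForm
/-- Evaluation of a formula in a valuation (model). -/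
def eval {α : Type} (v : α → Bool) : PropForm α → Bool
  | var a => v a
  | tru => true
  | fls => false
  | neg f => !(eval v f)
  | conj f g => eval v f && eval v g
  | disj f g => eval v f || eval v g
end PropForm

/-- A model `I` satisfies formula `A`. -/
def Sat {α : Type} (I : α → Bool) (A : PropForm α) : Prop := PropForm.eval I A = true

/-- The order induced by a single formula: `I ≤_A J` iff `I ⊨ A` or `J ⊭ A`. -/
def leA {α : Type} (A : PropForm α) (I J : α → Bool) : Prop := Sat I A ∨ ¬ Sat J A

/-- Auxiliary: the order generated from the flat state by a revision sequence given
in reverse order (most recent revision first). -/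
def leSeqRev {α : Type} (I J : α → Bool) : List (PropForm α) → Prop
  | [] => True
  | A :: S' => leA A I J ∧ (¬ leA A J I ∨ leSeqRev I J S')

/-- `I ≤_{∅S} J`: the order generated from the flat state by the sequence `S` of
lexicographic revisions (given in chronological order, so the last element of `S`
is the most recent revision).  It satisfies `leSeq [] I J ↔ True` and
`leSeq (S' ++ [A]) I J ↔ leA A I J ∧ (¬ leA A J I ∨ leSeq S' I J)`. -/
def leSeq {α : Type} (S : List (PropForm α)) (I J : α → Bool) : Prop :=
  leSeqRev I J S.reverse

/-- `I ≡_{∅S} J`: equivalence of models in the order generated by `S`. -/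
def equivSeq {α : Type} (S : List (PropForm α)) (I J : α → Bool) : Prop :=
  leSeq S I J ∧ leSeq S J I

/-- The Q-combination of formulas `S` determined by the Boolean vector `B`:
the conjunction over `i` of `S i` if `B i = true` and of `¬ S i` if `B i = false`. -/
def qcomb {α : Type} : List Bool → List (PropForm α) → PropForm α
  | b :: bs, s :: ss => PropForm.conj (if b then s else PropForm.neg s) (qcomb bs ss)
  | _, _ => PropForm.tru

/-! Both sides say that `I` and `J` give the same truth value to every formula of `S`: the
lexicographic order separates two models exactly at the most recent revision on which they
disagree, and the models of the Q-combination for `B` are those whose vector of truth values on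
`S` is `B`. -/

theorem leSeqRev_and_leSeqRev_iff {α : Type} (I J : α → Bool) (L : List (PropForm α)) :
    leSeqRev I J L ∧ leSeqRev J I L ↔ L.map (PropForm.eval I) = L.map (PropForm.eval J) := by
  induction L with
  | nil => simp [leSeqRev]
  | cons A L ih =>
    simp only [leSeqRev, List.map_cons, List.cons.injEq, ← ih, leA, Sat]
    cases PropForm.eval I A <;> cases PropForm.eval J A <;> simp

theorem equivSeq_iff_map_eval_eq {α : Type} (S : List (PropForm α)) (I J : α → Bool) :
    equivSeq S I J ↔ S.map (PropForm.eval I) = S.map (PropForm.eval J) := by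
  rw [equivSeq, leSeq, leSeq, leSeqRev_and_leSeqRev_iff, List.map_reverse, List.map_reverse,
    List.reverse_inj]

theorem sat_qcomb_iff {α : Type} (I : α → Bool) {B : List Bool} {S : List (PropForm α)}
    (h : B.length = S.length) : Sat I (qcomb B S) ↔ S.map (PropForm.eval I) = B := by
  induction B generalizing S with
  | nil =>
    obtain rfl := List.length_eq_zero_iff.mp h.symm
    simp [qcomb, Sat, PropForm.eval]
  | cons b B ih =>
    obtain _ | ⟨A, S⟩ := S
    · simp at h
    · simp only [List.length_cons, add_left_inj] at h
      rw [List.map_cons, List.cons.injEq, ← ih h]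
      cases b <;> simp [qcomb, Sat, PropForm.eval]

/-- STATEMENT 9: `I ≡_{∅S} J` iff `I` and `J` give the same truth value to every
Q-combination of the formulas of `S`. -/
theorem equivSeq_iff_qcomb {α : Type} (S : List (PropForm α)) (I J : α → Bool) :
    equivSeq S I J ↔
      ∀ B : List Bool, B.length = S.length →
        (Sat I (qcomb B S) ↔ Sat J (qcomb B S)) := by
  rw [equivSeq_iff_map_eval_eq]
  constructor
  · intro h B hB
    rw [sat_qcomb_iff I hB, sat_qcomb_iff J hB, h]
  · intro h
    have hlen : (S.map (PropForm.eval I)).length = S.length := List.length_map _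
    have := h _ hlen
    rwa [sat_qcomb_iff I hlen, sat_qcomb_iff J hlen, iff_true_left rfl, eq_comm] at this
end

section
/- The order ∅[S_1,S_2] coincides with ∅[S_2] if and only if one of the following holds: S_1 is unsatisfiable, S_1 is a tautology, S_1 is logically equivalent to S_2, or S_1 is logically equivalent to ¬S_2. -/
/-! Under `∅[S₁,S₂]` the formula `S₂` ranks first and `S₁` only breaks ties between models that agree
on `S₂`. So the two orders coincide iff `S₁` never separates such models, i.e. satisfaction of `S₁` is a
Boolean function of satisfaction of `S₂`; the four such functions give the four cases. -/

def DeterminedBy {β : Type*} (p q : β → Prop) : Prop :=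
  ∀ x y, (q x ↔ q y) → (p x ↔ p y)

theorem determinedBy_iff {β : Type*} (p q : β → Prop) :
    DeterminedBy p q ↔
      (∀ x, ¬ p x) ∨ (∀ x, p x) ∨ (∀ x, p x ↔ q x) ∨ (∀ x, p x ↔ ¬ q x) := by
  refine ⟨fun hpq => ?_, ?_⟩
  · by_cases hfalse : ∀ x, ¬ p x
    · exact Or.inl hfalse
    by_cases htrue : ∀ x, p x
    · exact Or.inr (Or.inl htrue)
    push Not at hfalse htrue
    obtain ⟨x₀, hx₀⟩ := hfalse
    obtain ⟨y₀, hy₀⟩ := htrue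
    have hq₀ : ¬ (q x₀ ↔ q y₀) := fun h => hy₀ ((hpq x₀ y₀ h).mp hx₀)
    -- `q` takes two values and they differ at `x₀` and `y₀`, so each `x` is `q`-tied to one of them.
    have hp : ∀ x, p x ↔ (q x ↔ q x₀) := by
      intro x
      by_cases hx : q x ↔ q x₀
      · simpa [hx, hx₀] using hpq x x₀ hx
      · have hxy : q x ↔ q y₀ := by tauto
        simpa [hx, hy₀] using hpq x y₀ hxy
    by_cases hqx₀ : q x₀
    · exact Or.inr (Or.inr (Or.inl fun x => by simp [hp x, hqx₀]))
    · exact Or.inr (Or.inr (Or.inr fun x => by simp [hp x, hqx₀]))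
  · rintro (h | h | h | h) x y hxy <;> simp only [h] <;> tauto

section Revision

variable {α : Type}

theorem leA_and_leA_iff (A : PropForm α) (I J : α → Bool) :
    leA A I J ∧ leA A J I ↔ (Sat I A ↔ Sat J A) := by
  unfold leA
  tauto

theorem leSeq_singleton (A : PropForm α) (I J : α → Bool) :
    leSeq [A] I J ↔ leA A I J := by
  simp [leSeq, leSeqRev]

theorem leSeq_pair (B A : PropForm α) (I J : α → Bool) :
    leSeq [B, A] I J ↔ leA A I J ∧ (leA A J I → leA B I J) := by
  simp only [leSeq, List.reverse_cons, List.reverse_nil, List.nil_append, List.cons_append,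
    leSeqRev, or_true, and_true, imp_iff_not_or]

theorem leSeq_pair_eq_singleton_iff (B A : PropForm α) :
    (∀ I J : α → Bool, leSeq [B, A] I J ↔ leSeq [A] I J) ↔
      DeterminedBy (Sat · B) (Sat · A) := by
  simp only [leSeq_pair, leSeq_singleton, DeterminedBy, ← leA_and_leA_iff]
  constructor
  · intro h I J ⟨hIJ, hJI⟩
    exact ⟨((h I J).mpr hIJ).2 hJI, ((h J I).mpr hJI).2 hIJ⟩
  · intro h I J
    exact ⟨And.left, fun hIJ => ⟨hIJ, fun hJI => (h I J ⟨hIJ, hJI⟩).1⟩⟩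

end Revision

/-- `∅[S₁,S₂]` coincides with `∅[S₂]` iff `S₁` is unsatisfiable,
tautological, equivalent to `S₂`, or equivalent to `¬S₂`. -/
theorem redundant_two {α : Type} (S1 S2 : PropForm α) :
    (∀ I J : α → Bool, leSeq [S1, S2] I J ↔ leSeq [S2] I J) ↔
      ((∀ I : α → Bool, ¬ Sat I S1) ∨
       (∀ I : α → Bool, Sat I S1) ∨
       (∀ I : α → Bool, Sat I S1 ↔ Sat I S2) ∨
       (∀ I : α → Bool, Sat I S1 ↔ ¬ Sat I S2)) := by
  rw [leSeq_pair_eq_singleton_iff, determinedBy_iff]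
end

section
/- If the order ∅([F] ++ S) coincides with ∅S for a lexicographic revision sequence S = [S_1,…,S_m], then for any formula S_0, the order ∅([F, S_0] ++ S) coincides with ∅([S_0] ++ S). That is, redundancy of the first revision is preserved when a new revision is inserted immediately after it. -/
/-!
In `∅(S ++ T)` the later revisions `T` decide first and `S` only breaks the ties of `T`.
So `∅([F] ++ S) = ∅S` says exactly that `I ≤ J` in `F` whenever `I` and `J` are tied in `∅S`,
and on such pairs `∅([F, S₀])` and `∅[S₀]` agree, since `F` only breaks ties of `S₀`.
-/

section

variable {α : Type}

theorem leSeqRev_append (I J : α → Bool) (L X : List (PropForm α)) :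
    leSeqRev I J (L ++ X) ↔ leSeqRev I J L ∧ (leSeqRev J I L → leSeqRev I J X) := by
  induction L with
  | nil => simp [leSeqRev]
  | cons A L ih =>
    simp only [List.cons_append, leSeqRev, ih]
    tauto

theorem leSeq_append (S T : List (PropForm α)) (I J : α → Bool) :
    leSeq (S ++ T) I J ↔ leSeq T I J ∧ (leSeq T J I → leSeq S I J) := by
  simp only [leSeq, List.reverse_append, leSeqRev_append]

theorem leSeq_cons_iff_of_leA {F : PropForm α} {I J : α → Bool} (hF : leA F I J)
    (T : List (PropForm α)) : leSeq (F :: T) I J ↔ leSeq T I J := by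
  rw [← List.singleton_append, leSeq_append, leSeq_singleton]
  exact and_iff_left fun _ => hF

theorem leA_of_forall_leSeq_cons_iff {F : PropForm α} {S : List (PropForm α)}
    (h : ∀ I J : α → Bool, leSeq (F :: S) I J ↔ leSeq S I J) {I J : α → Bool}
    (hIJ : leSeq S I J) (hJI : leSeq S J I) : leA F I J := by
  have hFS := (h I J).mpr hIJ
  rw [← List.singleton_append, leSeq_append] at hFS
  exact (leSeq_singleton F I J).mp (hFS.2 hJI)

end

/-- STATEMENT 13: redundancy of the first revision is preserved when a new revision
is inserted immediately after it. -/
theorem redundancy_insert_after {α : Type} (F : PropForm α) (S : List (PropForm α))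
    (h : ∀ I J : α → Bool, leSeq (F :: S) I J ↔ leSeq S I J) (S0 : PropForm α) :
    ∀ I J : α → Bool, leSeq (F :: S0 :: S) I J ↔ leSeq (S0 :: S) I J := by
  intro I J
  change leSeq ([F, S0] ++ S) I J ↔ leSeq ([S0] ++ S) I J
  rw [leSeq_append, leSeq_append]
  exact and_congr_right fun hIJ => imp_congr_right fun hJI =>
    leSeq_cons_iff_of_leA (leA_of_forall_leSeq_cons_iff h hIJ hJI) [S0]
end
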